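/- Any c-epichristoffel word w of length n > 1 can be written as the product of two c-epichristoffel words. -/
import Mathlib


/-- The standard episturmian morphism `ψ_a`: `ψ_a(a) = a`, `ψ_a(b) = a b` for `b ≠ a`,
acting on words (lists). -/
def psi {α : Type*} [DecidableEq α] (a : α) (w : List α) : List α :=
  w.flatMap (fun b => if b = a then [a] else [a, b])

/-- The morphism `ψ̄_a`: `ψ̄_a(a) = a`, `ψ̄_a(b) = b a` for `b ≠ a`. -/
def psiBar {α : Type*} [DecidableEq α] (a : α) (w : List α) : List α :=
  w.flatMap (fun b => if b = a then [a] else [b, a])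

/-- Composition `ψ_{a₁} ∘ ψ_{a₂} ∘ ⋯ ∘ ψ_{aₗ}` of standard episturmian morphisms,
indexed by the list `[a₁, a₂, …, aₗ]`, applied to a word. -/
def psiComp {α : Type*} [DecidableEq α] (s : List α) (w : List α) : List α :=
  s.foldr psi w

/-- The monoid of episturmian morphisms: generated by the `ψ_a`, the `ψ̄_a`
and letter permutations, under composition. -/
inductive IsEpisturmian {α : Type*} [DecidableEq α] : (List α → List α) → Prop
  | id : IsEpisturmian id
  | psi (a : α) (f : List α → List α) : IsEpisturmian f → IsEpisturmian (psi a ∘ f)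
  | psiBar (a : α) (f : List α → List α) : IsEpisturmian f → IsEpisturmian (psiBar a ∘ f)
  | perm (σ : Equiv.Perm α) (f : List α → List α) :
      IsEpisturmian f → IsEpisturmian ((List.map σ) ∘ f)

/-- A word is c-epichristoffel if it is the image of a letter by an episturmian morphism. -/
def CEpichristoffel {α : Type*} [DecidableEq α] (w : List α) : Prop :=
  ∃ (f : List α → List α) (a : α), IsEpisturmian f ∧ w = f [a]

lemma psi_append' {α : Type*} [DecidableEq α] (a : α) (u v : List α) :
    psi a (u ++ v) = psi a u ++ psi a v := by
  simp [psi]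

lemma psiBar_append' {α : Type*} [DecidableEq α] (a : α) (u v : List α) :
    psiBar a (u ++ v) = psiBar a u ++ psiBar a v := by
  simp [psiBar]

lemma psi_ne_nil' {α : Type*} [DecidableEq α] (a : α) (u : List α) (h : u ≠ []) :
    psi a u ≠ [] := by
  cases u with
  | nil => exact absurd rfl h
  | cons b t =>
    simp only [psi, List.flatMap_cons]
    split <;> simp

lemma psiBar_ne_nil' {α : Type*} [DecidableEq α] (a : α) (u : List α) (h : u ≠ []) :
    psiBar a u ≠ [] := by
  cases u with
  | nil => exact absurd rfl h
  | cons b t =>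
    simp only [psiBar, List.flatMap_cons]
    split <;> simp

lemma episturmian_ne_nil {α : Type*} [DecidableEq α] {f : List α → List α}
    (hf : IsEpisturmian f) : ∀ w : List α, w ≠ [] → f w ≠ [] := by
  induction hf with
  | id => exact fun w h => h
  | psi a f hf ih => exact fun w h => psi_ne_nil' a (f w) (ih w h)
  | psiBar a f hf ih => exact fun w h => psiBar_ne_nil' a (f w) (ih w h)
  | perm σ f hf ih =>
      intro w h
      simpa using ih w h

lemma letter_cEpichristoffel {α : Type*} [DecidableEq α] (a : α) :
    CEpichristoffel [a] :=
  ⟨id, a, IsEpisturmian.id, rfl⟩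

lemma cEpichristoffel_psi {α : Type*} [DecidableEq α] (a : α) {w : List α}
    (hw : CEpichristoffel w) : CEpichristoffel (psi a w) := by
  obtain ⟨f, b, hf, rfl⟩ := hw
  exact ⟨psi a ∘ f, b, IsEpisturmian.psi a f hf, rfl⟩

lemma cEpichristoffel_psiBar {α : Type*} [DecidableEq α] (a : α) {w : List α}
    (hw : CEpichristoffel w) : CEpichristoffel (psiBar a w) := by
  obtain ⟨f, b, hf, rfl⟩ := hw
  exact ⟨psiBar a ∘ f, b, IsEpisturmian.psiBar a f hf, rfl⟩

lemma cEpichristoffel_perm {α : Type*} [DecidableEq α] (σ : Equiv.Perm α) {w : List α}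
    (hw : CEpichristoffel w) : CEpichristoffel (w.map σ) := by
  obtain ⟨f, b, hf, rfl⟩ := hw
  exact ⟨(List.map σ) ∘ f, b, IsEpisturmian.perm σ f hf, rfl⟩

lemma cEpichristoffel_key {α : Type*} [DecidableEq α] {f : List α → List α}
    (hf : IsEpisturmian f) : ∀ a : α, 1 < (f [a]).length →
    ∃ u v : List α, CEpichristoffel u ∧ CEpichristoffel v ∧ f [a] = u ++ v := by
  induction hf with
  | id => intro a h; simp at h
  | psi a f hf ih =>
      intro b h
      have hne : f [b] ≠ [] := episturmian_ne_nil hf [b] (by simp)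
      obtain ⟨c, t, ht⟩ := List.exists_cons_of_ne_nil hne
      rcases t with _ | ⟨d, t⟩
      · -- f [b] = [c]
        by_cases hca : c = a
        · exfalso
          simp [ht, psi, hca] at h
        · refine ⟨[a], [c], letter_cEpichristoffel a, letter_cEpichristoffel c, ?_⟩
          simp [ht, psi, hca]
      · have hlen : 1 < (f [b]).length := by simp [ht]
        obtain ⟨u, v, hu, hv, huv⟩ := ih b hlen
        exact ⟨psi a u, psi a v, cEpichristoffel_psi a hu, cEpichristoffel_psi a hv,
          by simp [Function.comp, huv, psi_append']⟩
  | psiBar a f hf ih =>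
      intro b h
      have hne : f [b] ≠ [] := episturmian_ne_nil hf [b] (by simp)
      obtain ⟨c, t, ht⟩ := List.exists_cons_of_ne_nil hne
      rcases t with _ | ⟨d, t⟩
      · by_cases hca : c = a
        · exfalso
          simp [ht, psiBar, hca] at h
        · refine ⟨[c], [a], letter_cEpichristoffel c, letter_cEpichristoffel a, ?_⟩
          simp [ht, psiBar, hca]
      · have hlen : 1 < (f [b]).length := by simp [ht]
        obtain ⟨u, v, hu, hv, huv⟩ := ih b hlen
        exact ⟨psiBar a u, psiBar a v, cEpichristoffel_psiBar a hu, cEpichristoffel_psiBar a hv,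
          by simp [Function.comp, huv, psiBar_append']⟩
  | perm σ f hf ih =>
      intro b h
      have hlen : 1 < (f [b]).length := by simpa using h
      obtain ⟨u, v, hu, hv, huv⟩ := ih b hlen
      exact ⟨u.map σ, v.map σ, cEpichristoffel_perm σ hu, cEpichristoffel_perm σ hv,
        by simp [Function.comp, huv]⟩

/-- Any c-epichristoffel word of length `n > 1` can be written as the product
of two c-epichristoffel words. -/
theorem cEpichristoffel_product {α : Type*} [DecidableEq α] (w : List α)
    (hw : CEpichristoffel w) (hlen : 1 < w.length) :
    ∃ u v : List α, CEpichristoffel u ∧ CEpichristoffel v ∧ w = u ++ v := by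
  obtain ⟨f, a, hf, rfl⟩ := hw
  exact cEpichristoffel_key hf a hlen
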